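/- arXiv:1107.1561 — 2 statements merged into one kernel-verified Lean document; each statement's English description precedes it below -/
import Mathlib

section
/- If Z₁ and Z₂ are two real n×n matrices that both minimize the nuclear norm ‖Z‖_* over all Z satisfying X = XZ, for a given real m×n matrix X, then Z₁ = Z₂. -/
/-!
Let `P` be the orthogonal projection onto `(ker X)ᗮ`. Then `X * P = X`, and every feasible `Z`
satisfies `P * Z = P`, so `Zᴴ * Z = Pᴴ * P + (Z - P)ᴴ * (Z - P)` dominates `Pᴴ * P` in the Loewner
order, strictly unless `Z = P`. Since `‖Z‖_* = tr √(Zᴴ * Z)`, and both the square root (on positive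
semidefinite matrices) and the trace are strictly monotone for that order, `‖Z‖_* > ‖P‖_*` for every
feasible `Z ≠ P`: the projection `P` is the only minimizer.
-/

open Matrix

/-- The nuclear norm of a real matrix: the sum of its singular values
(the square roots of the eigenvalues of `Aᵀ * A`). -/
noncomputable def nuclearNorm {m n : Type*} [Fintype m] [Fintype n] [DecidableEq n]
    (A : Matrix m n ℝ) : ℝ :=
  ∑ i, Real.sqrt ((Matrix.isHermitian_conjTranspose_mul_self A).eigenvalues i)

open scoped MatrixOrder ComplexOrder

lemma IsStarProjection.star_mul_self_eq_add {R : Type*} [Ring R] [StarRing R] {p z : R}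
    (hp : IsStarProjection p) (hpz : p * z = p) :
    star z * z = star p * p + star (z - p) * (z - p) := by
  have hp0 : p * (z - p) = 0 := by rw [mul_sub, hpz, hp.isIdempotentElem.eq, sub_self]
  have h0p : star (z - p) * p = 0 := by
    rw [← hp.isSelfAdjoint.star_eq, ← star_mul, hp.isSelfAdjoint.star_eq, hp0, star_zero]
  calc star z * z = star (p + (z - p)) * (p + (z - p)) := by rw [add_sub_cancel]
    _ = star p * p + star (z - p) * (z - p) := by
      rw [star_add, hp.isSelfAdjoint.star_eq, add_mul, mul_add, mul_add, hp0, h0p]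
      abel

namespace Matrix

variable {𝕜 m n : Type*} [RCLike 𝕜] [Fintype n]

lemma trace_strictMono : StrictMono (trace : Matrix n n 𝕜 → 𝕜) := by
  intro A B hAB
  have hpsd : (B - A).PosSemidef := hAB.le
  refine lt_of_le_of_ne (sub_nonneg.mp (trace_sub B A ▸ hpsd.trace_nonneg)) fun htr => hAB.ne ?_
  exact (sub_eq_zero.mp (hpsd.trace_eq_zero_iff.mp (by rw [trace_sub, htr, sub_self]))).symm

variable [DecidableEq n]

section KerOrthogonalProjection

noncomputable def kerOrthogonalProjection (X : Matrix m n 𝕜) : Matrix n n 𝕜 :=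
  (toEuclideanCLM (𝕜 := 𝕜) (n := n)).symm (LinearMap.ker (toEuclideanLin X))ᗮ.starProjection

lemma isStarProjection_kerOrthogonalProjection (X : Matrix m n 𝕜) :
    IsStarProjection X.kerOrthogonalProjection :=
  isStarProjection_starProjection.map (toEuclideanCLM (𝕜 := 𝕜) (n := n)).symm

lemma toEuclideanLin_kerOrthogonalProjection (X : Matrix m n 𝕜) :
    toEuclideanLin X.kerOrthogonalProjection =
      (LinearMap.ker (toEuclideanLin X))ᗮ.starProjection := by
  rw [← coe_toEuclideanCLM_eq_toEuclideanLin, kerOrthogonalProjection,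
    StarAlgEquiv.apply_symm_apply]

lemma mul_kerOrthogonalProjection (X : Matrix m n 𝕜) : X * X.kerOrthogonalProjection = X := by
  apply (toEuclideanLin (𝕜 := 𝕜) (m := m) (n := n)).injective
  ext1 v
  rw [toLpLin_mul_same, LinearMap.comp_apply, toEuclideanLin_kerOrthogonalProjection]
  have h := Submodule.sub_starProjection_mem_orthogonal
    (K := (LinearMap.ker (toEuclideanLin X))ᗮ) v
  rw [Submodule.orthogonal_orthogonal, LinearMap.mem_ker, map_sub, sub_eq_zero] at h
  exact h.symm

lemma kerOrthogonalProjection_mul_of_mul_eq {X : Matrix m n 𝕜} {Z : Matrix n n 𝕜}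
    (hZ : X * Z = X) : X.kerOrthogonalProjection * Z = X.kerOrthogonalProjection := by
  apply (toEuclideanLin (𝕜 := 𝕜) (m := n) (n := n)).injective
  ext1 v
  have h : toEuclideanLin Z v - v ∈ LinearMap.ker (toEuclideanLin X) := by
    rw [LinearMap.mem_ker, map_sub, ← LinearMap.comp_apply, ← toLpLin_mul_same, hZ, sub_self]
  rw [toLpLin_mul_same, LinearMap.comp_apply, toEuclideanLin_kerOrthogonalProjection,
    ← sub_eq_zero, ← map_sub]
  exact (Submodule.starProjection_apply_eq_zero_iff _).mpr (Submodule.le_orthogonal_orthogonal _ h)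

end KerOrthogonalProjection

section Sqrt

lemma IsHermitian.trace_cfc {A : Matrix n n 𝕜} (hA : A.IsHermitian) (f : ℝ → ℝ) :
    (cfc f A).trace = ∑ i, (f (hA.eigenvalues i) : 𝕜) := by
  rw [hA.cfc_eq, IsHermitian.cfc, Unitary.conjStarAlgAut_apply, trace_mul_cycle,
    Unitary.coe_star_mul_self, one_mul, trace_diagonal]
  rfl

lemma PosSemidef.trace_sqrt {A : Matrix n n 𝕜} (hA : A.PosSemidef) :
    (CFC.sqrt A).trace = ∑ i, (√(hA.1.eigenvalues i) : 𝕜) := by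
  rw [CFC.sqrt_eq_cfc, cfc_nnreal_eq_real _ A hA.nonneg, hA.1.trace_cfc]
  simp [Real.coe_sqrt, max_eq_left (hA.eigenvalues_nonneg _)]

lemma dotProduct_sq_sub_sq_mulVec {S T : Matrix n n 𝕜} (hST : (S - T).IsHermitian)
    {t : ℝ} {v : n → 𝕜} (hv : (S - T) *ᵥ v = t • v) :
    star v ⬝ᵥ (S ^ 2 - T ^ 2) *ᵥ v = t • (star v ⬝ᵥ S *ᵥ v + star v ⬝ᵥ T *ᵥ v) := by
  have hsplit : S ^ 2 - T ^ 2 = S * (S - T) + (S - T) * T := by noncomm_ring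
  have hleft : star v ᵥ* (S - T) = t • star v := by
    rw [← hST.eq, ← star_mulVec, hv, star_smul, star_trivial]
  rw [hsplit, add_mulVec, dotProduct_add, ← mulVec_mulVec, ← mulVec_mulVec, hv, mulVec_smul,
    dotProduct_smul, dotProduct_mulVec (star v) (S - T), hleft, smul_dotProduct, smul_add]

/-- For `𝕜 = ℂ` this is `CFC.sqrt_le_sqrt`, but real matrices do not form a C⋆-algebra.
An eigenvector `v` of `S - T` for an eigenvalue `t < 0` would give
`0 ≤ ⟪v, (S² - T²) v⟫ = t (⟪v, S v⟫ + ⟪v, T v⟫) ≤ 0`, hence `S v = T v = 0`. -/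
lemma le_of_sq_le_sq {S T : Matrix n n 𝕜} (hS : 0 ≤ S) (hT : 0 ≤ T) (h : T ^ 2 ≤ S ^ 2) :
    T ≤ S := by
  rw [nonneg_iff_posSemidef] at hS hT
  rw [le_iff] at h ⊢
  have hD : (S - T).IsHermitian := hS.1.sub hT.1
  refine hD.posSemidef_iff_eigenvalues_nonneg.mpr fun i => ?_
  by_contra! hneg
  set v : n → 𝕜 := ⇑(hD.eigenvectorBasis i)
  have hv : (S - T) *ᵥ v = hD.eigenvalues i • v := hD.mulVec_eigenvectorBasis i
  have hSv := hS.dotProduct_mulVec_nonneg v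
  have hTv := hT.dotProduct_mulVec_nonneg v
  have hquad := h.dotProduct_mulVec_nonneg v
  rw [dotProduct_sq_sub_sq_mulVec hD hv] at hquad
  have hsum : star v ⬝ᵥ S *ᵥ v + star v ⬝ᵥ T *ᵥ v = 0 := by
    have h0 := le_antisymm (smul_nonpos_of_nonpos_of_nonneg hneg.le (add_nonneg hSv hTv)) hquad
    exact (smul_eq_zero.mp h0).resolve_left hneg.ne
  rw [add_eq_zero_iff_of_nonneg hSv hTv, hS.dotProduct_mulVec_zero_iff,
    hT.dotProduct_mulVec_zero_iff] at hsum
  have hv0 : v ≠ 0 := fun h0 =>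
    (hD.eigenvectorBasis).orthonormal.ne_zero i (by simpa [v] using congrArg (WithLp.toLp 2) h0)
  rw [sub_mulVec, hsum.1, hsum.2, sub_zero, eq_comm, smul_eq_zero] at hv
  exact hv.elim hneg.ne hv0

lemma sqrt_strictMonoOn : StrictMonoOn CFC.sqrt (Set.Ici (0 : Matrix n n 𝕜)) := by
  intro B hB A hA hBA
  refine lt_of_le_of_ne ?_ fun h => hBA.ne ?_
  · exact le_of_sq_le_sq (CFC.sqrt_nonneg A) (CFC.sqrt_nonneg B)
      (by rw [CFC.sq_sqrt B hB, CFC.sq_sqrt A hA]; exact hBA.le)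
  · rw [← CFC.sq_sqrt B hB, ← CFC.sq_sqrt A hA, h]

end Sqrt

end Matrix

section NuclearNorm

variable {m n : Type*} [Fintype n] [DecidableEq n]

lemma nuclearNorm_eq_trace_sqrt [Fintype m] (A : Matrix m n ℝ) :
    nuclearNorm A = (CFC.sqrt (Aᴴ * A)).trace := by
  rw [(posSemidef_conjTranspose_mul_self A).trace_sqrt]
  rfl

lemma nuclearNorm_lt_of_conjTranspose_mul_self_lt [Fintype m] {A B : Matrix m n ℝ}
    (h : Aᴴ * A < Bᴴ * B) : nuclearNorm A < nuclearNorm B := by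
  rw [nuclearNorm_eq_trace_sqrt, nuclearNorm_eq_trace_sqrt]
  exact trace_strictMono (sqrt_strictMonoOn (posSemidef_conjTranspose_mul_self A).nonneg
    (posSemidef_conjTranspose_mul_self B).nonneg h)

lemma eq_kerOrthogonalProjection_of_nuclearNorm_le {X : Matrix m n ℝ} {Z : Matrix n n ℝ}
    (hZ : X * Z = X) (h : nuclearNorm Z ≤ nuclearNorm X.kerOrthogonalProjection) :
    Z = X.kerOrthogonalProjection := by
  set P := X.kerOrthogonalProjection
  have hpyth : Zᴴ * Z = Pᴴ * P + (Z - P)ᴴ * (Z - P) :=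
    (isStarProjection_kerOrthogonalProjection X).star_mul_self_eq_add
      (kerOrthogonalProjection_mul_of_mul_eq hZ)
  by_contra hne
  have hlt : Pᴴ * P < Zᴴ * Z := by
    refine lt_of_le_of_ne ?_ fun heq => hne ?_
    · rw [hpyth]
      exact le_add_of_nonneg_right (posSemidef_conjTranspose_mul_self _).nonneg
    · rwa [← heq, left_eq_add, conjTranspose_mul_self_eq_zero, sub_eq_zero] at hpyth
  exact h.not_gt (nuclearNorm_lt_of_conjTranspose_mul_self_lt hlt)

end NuclearNorm

/-- If `Z₁` and `Z₂` both minimize the nuclear norm over all `Z` with `X = X * Z`,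
then `Z₁ = Z₂`. -/
theorem nuclearNorm_minimizer_unique {m n : ℕ} (X : Matrix (Fin m) (Fin n) ℝ)
    (Z₁ Z₂ : Matrix (Fin n) (Fin n) ℝ)
    (h₁ : X = X * Z₁) (h₂ : X = X * Z₂)
    (hmin₁ : ∀ W : Matrix (Fin n) (Fin n) ℝ, X = X * W → nuclearNorm Z₁ ≤ nuclearNorm W)
    (hmin₂ : ∀ W : Matrix (Fin n) (Fin n) ℝ, X = X * W → nuclearNorm Z₂ ≤ nuclearNorm W) :
    Z₁ = Z₂ := by
  have hP : X = X * X.kerOrthogonalProjection := (mul_kerOrthogonalProjection X).symm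
  rw [eq_kerOrthogonalProjection_of_nuclearNorm_le h₁.symm (hmin₁ _ hP),
    eq_kerOrthogonalProjection_of_nuclearNorm_le h₂.symm (hmin₂ _ hP)]
end

section
/- Let W be a real matrix written in block form W = [[A, B], [C, D]], where A and D are (possibly non-square) diagonal blocks of a 2×2 block partition of the rows and columns of W. Then ‖W‖_* ≥ ‖A‖_* + ‖D‖_*; in particular, ‖A‖_* ≤ ‖W‖_* − ‖D‖_*. -/
open Matrix

/-!
The nuclear norm is dual to the operator norm: `tr (Mᵀ Q) ≤ ‖M‖_*` for every contraction `Q`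
(expand the trace in an orthonormal eigenbasis `(uⱼ)` of `Mᵀ M` and apply Cauchy–Schwarz to
`⟪M uⱼ, Q uⱼ⟫`), with equality when `Q` is the polar factor of `M`. For `W = [[A, B], [C, D]]`,
the block-diagonal matrix of the polar factors of `A` and `D` is a contraction, and pairing it
with `W` sees only the diagonal blocks: `tr (Wᵀ Q) = ‖A‖_* + ‖D‖_*`.
-/

namespace Matrix

variable {m n : Type*} [Fintype m] [Fintype n]

def IsContraction (Q : Matrix m n ℝ) : Prop :=
  ∀ x : n → ℝ, Q *ᵥ x ⬝ᵥ Q *ᵥ x ≤ x ⬝ᵥ x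

theorem mulVec_dotProduct_mulVec (M Q : Matrix m n ℝ) (x : n → ℝ) :
    M *ᵥ x ⬝ᵥ Q *ᵥ x = x ⬝ᵥ (Mᵀ * Q) *ᵥ x := by
  rw [← mulVec_mulVec, dotProduct_mulVec x, vecMul_transpose]

theorem dotProduct_le_sqrt_mul_sqrt (a b : m → ℝ) : a ⬝ᵥ b ≤ √(a ⬝ᵥ a) * √(b ⬝ᵥ b) := by
  simpa only [dotProduct, sq] using Real.sum_mul_le_sqrt_mul_sqrt Finset.univ a b

variable [DecidableEq n]

theorem trace_eq_sum_dotProduct_mulVec_of_mul_transpose_eq_one {U : Matrix n n ℝ}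
    (hU : U * Uᵀ = 1) (X : Matrix n n ℝ) : trace X = ∑ j, Uᵀ j ⬝ᵥ X *ᵥ Uᵀ j := by
  have : trace X = trace (Uᵀ * X * U) := by
    rw [trace_mul_cycle, hU, Matrix.one_mul]
  rw [this]
  simp only [trace, diag, mul_mul_apply]

noncomputable def rightSingularVectors (M : Matrix m n ℝ) : Matrix n n ℝ :=
  (isHermitian_conjTranspose_mul_self M).eigenvectorUnitary

theorem rightSingularVectors_transpose_mul_self (M : Matrix m n ℝ) :
    (rightSingularVectors M)ᵀ * rightSingularVectors M = 1 := by
  simpa [rightSingularVectors, star_eq_conjTranspose, conjTranspose_eq_transpose_of_trivial]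
    using Unitary.coe_star_mul_self (isHermitian_conjTranspose_mul_self M).eigenvectorUnitary

theorem rightSingularVectors_mul_transpose_self (M : Matrix m n ℝ) :
    rightSingularVectors M * (rightSingularVectors M)ᵀ = 1 := by
  simpa [rightSingularVectors, star_eq_conjTranspose, conjTranspose_eq_transpose_of_trivial]
    using Unitary.coe_mul_star_self (isHermitian_conjTranspose_mul_self M).eigenvectorUnitary

theorem transpose_mul_transpose_mul_self_mul_rightSingularVectors (M : Matrix m n ℝ) :
    (rightSingularVectors M)ᵀ * (Mᵀ * M) * rightSingularVectors M =
      diagonal (isHermitian_conjTranspose_mul_self M).eigenvalues := by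
  simpa [rightSingularVectors, star_eq_conjTranspose, conjTranspose_eq_transpose_of_trivial,
    Function.comp_def, Unitary.conjStarAlgAut_star_apply]
    using (isHermitian_conjTranspose_mul_self M).conjStarAlgAut_star_eigenvectorUnitary

theorem IsContraction.trace_transpose_mul_le_nuclearNorm {Q : Matrix m n ℝ}
    (hQ : IsContraction Q) (M : Matrix m n ℝ) : trace (Mᵀ * Q) ≤ nuclearNorm M := by
  set U := rightSingularVectors M
  set μ := (isHermitian_conjTranspose_mul_self M).eigenvalues
  rw [trace_eq_sum_dotProduct_mulVec_of_mul_transpose_eq_one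
    (rightSingularVectors_mul_transpose_self M), nuclearNorm]
  refine Finset.sum_le_sum fun j _ => ?_
  have hM : M *ᵥ Uᵀ j ⬝ᵥ M *ᵥ Uᵀ j = μ j := by
    rw [mulVec_dotProduct_mulVec, ← mul_mul_apply,
      transpose_mul_transpose_mul_self_mul_rightSingularVectors, diagonal_apply_eq]
  have hu : Uᵀ j ⬝ᵥ Uᵀ j = 1 := by
    have := congrFun₂ (rightSingularVectors_transpose_mul_self M) j j
    rwa [mul_apply', one_apply_eq] at this
  calc Uᵀ j ⬝ᵥ (Mᵀ * Q) *ᵥ Uᵀ j = M *ᵥ Uᵀ j ⬝ᵥ Q *ᵥ Uᵀ j :=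
        (mulVec_dotProduct_mulVec _ _ _).symm
    _ ≤ √(M *ᵥ Uᵀ j ⬝ᵥ M *ᵥ Uᵀ j) * √(Q *ᵥ Uᵀ j ⬝ᵥ Q *ᵥ Uᵀ j) :=
        dotProduct_le_sqrt_mul_sqrt _ _
    _ ≤ √(μ j) * 1 := by
      rw [hM]
      gcongr
      exact Real.sqrt_le_one.mpr (hu ▸ hQ (Uᵀ j))
    _ = √(μ j) := mul_one _

/-- The partial isometry `Q` of the polar decomposition `M = Q (Mᵀ M)^{1/2}`; since `(√0)⁻¹ = 0`,
the inverse square root is taken on the range of `Mᵀ M` only. -/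
noncomputable def polarFactor (M : Matrix m n ℝ) : Matrix m n ℝ :=
  M * (rightSingularVectors M *
    diagonal (fun i => (√((isHermitian_conjTranspose_mul_self M).eigenvalues i))⁻¹) *
    (rightSingularVectors M)ᵀ)

theorem trace_transpose_mul_polarFactor (M : Matrix m n ℝ) :
    trace (Mᵀ * polarFactor M) = nuclearNorm M := by
  set U := rightSingularVectors M
  set μ := (isHermitian_conjTranspose_mul_self M).eigenvalues
  have hcycle : trace (Mᵀ * polarFactor M) =
      trace (Uᵀ * (Mᵀ * M) * U * diagonal fun i => (√(μ i))⁻¹) := by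
    rw [show Mᵀ * polarFactor M = Mᵀ * M * U * (diagonal fun i => (√(μ i))⁻¹) * Uᵀ by
      simp only [polarFactor, Matrix.mul_assoc, U, μ], trace_mul_comm]
    simp only [Matrix.mul_assoc]
  rw [hcycle, transpose_mul_transpose_mul_self_mul_rightSingularVectors, diagonal_mul_diagonal,
    trace_diagonal, nuclearNorm]
  exact Finset.sum_congr rfl fun i _ => by rw [← div_eq_mul_inv, Real.div_sqrt]

theorem isContraction_polarFactor (M : Matrix m n ℝ) : IsContraction (polarFactor M) := by
  set U := rightSingularVectors M
  set μ := (isHermitian_conjTranspose_mul_self M).eigenvalues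
  have hμ : ∀ i, μ i * (√(μ i))⁻¹ ^ 2 ≤ 1 := fun i => by
    rw [inv_pow, Real.sq_sqrt (eigenvalues_conjTranspose_mul_self_nonneg M i)]
    exact mul_inv_le_one
  intro x
  set y := Uᵀ *ᵥ x
  have hy : y ⬝ᵥ y = x ⬝ᵥ x := by
    rw [mulVec_dotProduct_mulVec, transpose_transpose, rightSingularVectors_mul_transpose_self,
      one_mulVec]
  have hQx : polarFactor M *ᵥ x = (M * U) *ᵥ (diagonal (fun i => (√(μ i))⁻¹) *ᵥ y) := by
    simp only [polarFactor, mulVec_mulVec, Matrix.mul_assoc, U, μ, y]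
  have hMU : (M * U)ᵀ * (M * U) = diagonal μ := by
    rw [transpose_mul, ← transpose_mul_transpose_mul_self_mul_rightSingularVectors]
    simp only [Matrix.mul_assoc, U]
  rw [hQx, mulVec_dotProduct_mulVec, hMU, ← hy]
  simp only [dotProduct, mulVec_diagonal]
  refine Finset.sum_le_sum fun i _ => ?_
  calc (√(μ i))⁻¹ * y i * (μ i * ((√(μ i))⁻¹ * y i))
        = μ i * (√(μ i))⁻¹ ^ 2 * (y i * y i) := by ring
    _ ≤ y i * y i := mul_le_of_le_one_left (mul_self_nonneg _) (hμ i)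

section Blocks

variable {m₁ m₂ n₁ n₂ : Type*} [Fintype m₁] [Fintype m₂] [Fintype n₁] [Fintype n₂]

theorem IsContraction.fromBlocks_zero {P : Matrix m₁ n₁ ℝ} {Q : Matrix m₂ n₂ ℝ}
    (hP : IsContraction P) (hQ : IsContraction Q) : IsContraction (fromBlocks P 0 0 Q) := by
  intro x
  obtain ⟨u, v, rfl⟩ : ∃ u v, x = Sum.elim u v := ⟨_, _, (Sum.elim_comp_inl_inr x).symm⟩
  simp only [fromBlocks_mulVec, Sum.elim_comp_inl, Sum.elim_comp_inr, zero_mulVec, add_zero,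
    zero_add, sumElim_dotProduct_sumElim]
  exact add_le_add (hP u) (hQ v)

theorem trace_transpose_fromBlocks_mul_fromBlocks_zero (A : Matrix m₁ n₁ ℝ) (B : Matrix m₁ n₂ ℝ)
    (C : Matrix m₂ n₁ ℝ) (D : Matrix m₂ n₂ ℝ) (P : Matrix m₁ n₁ ℝ) (Q : Matrix m₂ n₂ ℝ) :
    trace ((fromBlocks A B C D)ᵀ * fromBlocks P 0 0 Q) = trace (Aᵀ * P) + trace (Dᵀ * Q) := by
  simp [fromBlocks_transpose, fromBlocks_multiply, trace, Fintype.sum_sum_type]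

theorem nuclearNorm_add_nuclearNorm_le_nuclearNorm_fromBlocks [DecidableEq n₁] [DecidableEq n₂]
    (A : Matrix m₁ n₁ ℝ) (B : Matrix m₁ n₂ ℝ) (C : Matrix m₂ n₁ ℝ) (D : Matrix m₂ n₂ ℝ) :
    nuclearNorm A + nuclearNorm D ≤ nuclearNorm (fromBlocks A B C D) := by
  calc nuclearNorm A + nuclearNorm D
      = trace ((fromBlocks A B C D)ᵀ * fromBlocks (polarFactor A) 0 0 (polarFactor D)) := by
        rw [trace_transpose_fromBlocks_mul_fromBlocks_zero, trace_transpose_mul_polarFactor,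
          trace_transpose_mul_polarFactor]
    _ ≤ nuclearNorm (fromBlocks A B C D) :=
        ((isContraction_polarFactor A).fromBlocks_zero
          (isContraction_polarFactor D)).trace_transpose_mul_le_nuclearNorm _

end Blocks

end Matrix

/-- For a matrix `W = [[A, B], [C, D]]` in `2 × 2` block form, the nuclear norm of `W`
is at least `‖A‖₊ + ‖D‖₊`; in particular `‖A‖₊ ≤ ‖W‖₊ − ‖D‖₊`. -/
theorem nuclearNorm_fromBlocks_ge {m₁ m₂ n₁ n₂ : ℕ}
    (A : Matrix (Fin m₁) (Fin n₁) ℝ) (B : Matrix (Fin m₁) (Fin n₂) ℝ)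
    (C : Matrix (Fin m₂) (Fin n₁) ℝ) (D : Matrix (Fin m₂) (Fin n₂) ℝ) :
    nuclearNorm A + nuclearNorm D ≤ nuclearNorm (Matrix.fromBlocks A B C D) ∧
    nuclearNorm A ≤ nuclearNorm (Matrix.fromBlocks A B C D) - nuclearNorm D := by
  have h := nuclearNorm_add_nuclearNorm_le_nuclearNorm_fromBlocks A B C D
  exact ⟨h, le_sub_iff_add_le.mpr h⟩
end
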